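/- Let G be a finite-dimensional Hopf algebra, ▷ : Ĝ ⊗ A → A a left Hopf module action on an algebra A, and ◁ : B ⊗ Ĝ → B a right Hopf module action on an algebra B. Then the vector space A ⊗ Ĝ ⊗ B equipped with the product (A ⋊ φ ⋉ B)(A' ⋊ ψ ⋉ B') := A(φ₍₁₎ ▷ A') ⋊ φ₍₂₎ψ₍₁₎ ⋉ (B ◁ ψ₍₂₎)B' is an associative unital algebra with unit 1_A ⋊ 1̂ ⋉ 1_B. -/

import Mathlib

/-!
Write `ℛ R φ` for the chosen Sweedler representation `Δφ = ∑ᵢ i.1 ⊗ i.2`. Expanding both bracketings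
of a product of three pure tensors `a ⋊ φ ⋉ b`, `a' ⋊ ψ ⋉ b'`, `a'' ⋊ χ ⋉ b''` with the measuring
property of the two actions and multiplicativity of `Δ` gives in both cases the sum of
`a (φ₁ ▷ a') (φ₂ψ₁ ▷ a'') ⋊ φ₃ψ₂χ₁ ⋉ (b ◁ ψ₃χ₂) (b' ◁ χ₃) b''`, except that each of the iterated
coproducts of `φ`, `ψ`, `χ` appears bracketed as `(Δ ⊗ id) Δ` on one side and as `(id ⊗ Δ) Δ` on
the other. The summand is trilinear in each of the three Sweedler triples, so coassociativity
identifies the two sums. The unit laws follow from counitality.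
-/

open TensorProduct Coalgebra

section Trilinear

variable {R H V : Type*} [CommSemiring R] [AddCommMonoid H] [Module R H]
  [AddCommMonoid V] [Module R V]

variable (R) in
def IsTrilinear (f : H → H → H → V) : Prop :=
  ∃ L : H ⊗[R] (H ⊗[R] H) →ₗ[R] V, ∀ x y z, f x y z = L (x ⊗ₜ (y ⊗ₜ z))

theorem IsTrilinear.sum {ι : Type*} (s : Finset ι) {f : ι → H → H → H → V}
    (hf : ∀ i, IsTrilinear R (f i)) :
    IsTrilinear R fun x y z => ∑ i ∈ s, f i x y z := by
  choose L hL using hf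
  exact ⟨∑ i ∈ s, L i, fun x y z => by simp only [hL, LinearMap.sum_apply]⟩

namespace Coalgebra

variable [Coalgebra R H] {φ : H} {ι : Type*}

theorem sum_sum_eq_of_isTrilinear {κ Λ : ι → Type*} (r : Repr R φ ι)
    (r₁ : (i : ι) → Repr R (r.left i) (κ i)) (r₂ : (i : ι) → Repr R (r.right i) (Λ i))
    {f : H → H → H → V} (hf : IsTrilinear R f) :
    ∑ i ∈ r.index, ∑ j ∈ (r₁ i).index, f ((r₁ i).left j) ((r₁ i).right j) (r.right i) =
      ∑ i ∈ r.index, ∑ j ∈ (r₂ i).index, f (r.left i) ((r₂ i).left j) ((r₂ i).right j) := by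
  obtain ⟨L, hL⟩ := hf
  simpa only [hL, map_sum] using congrArg L (sum_tmul_tmul_eq r r₁ r₂)

theorem sum_counit_right_smul (r : Repr R φ ι) :
    ∑ i ∈ r.index, counit (R := R) (r.right i) • r.left i = φ := by
  simpa only [map_sum, lift.tmul, LinearMap.flip_apply, LinearMap.lsmul_apply, one_smul]
    using congr(TensorProduct.lift (LinearMap.lsmul R H).flip $(sum_tmul_counit_eq r))

end Coalgebra

end Trilinear

def Coalgebra.Repr.one (R H : Type*) [CommSemiring R] [Semiring H] [Bialgebra R H] :
    Repr R (1 : H) Unit where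
  index := {()}
  left _ := 1
  right _ := 1
  eq := by simp [Algebra.TensorProduct.one_def]

section CrossedProduct

variable {R H A B : Type*} [CommSemiring R] [Semiring H] [Bialgebra R H]
  [Semiring A] [Algebra R A] [Semiring B] [Algebra R B]

variable (R) in
def IsMeasuring (act : H →ₗ[R] A →ₗ[R] A) : Prop :=
  ∀ φ x y, act φ (x * y) = LinearMap.mul' R A (map (act.flip x) (act.flip y) (comul φ))

theorem IsMeasuring.apply_mul {act : H →ₗ[R] A →ₗ[R] A} (h : IsMeasuring R act) {φ : H}
    {ι : Type*} (r : Repr R φ ι) (x y : A) :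
    act φ (x * y) = ∑ i ∈ r.index, act (r.left i) x * act (r.right i) y := by
  simp [h φ, ← r.eq]

def IsCrossedProductMul (actA : H →ₗ[R] A →ₗ[R] A) (ractB : H →ₗ[R] B →ₗ[R] B)
    (mul : A ⊗[R] (H ⊗[R] B) →ₗ[R] A ⊗[R] (H ⊗[R] B) →ₗ[R] A ⊗[R] (H ⊗[R] B)) : Prop :=
  ∀ (a a' : A) (b b' : B) (φ ψ : H),
    mul (a ⊗ₜ[R] (φ ⊗ₜ[R] b)) (a' ⊗ₜ[R] (ψ ⊗ₜ[R] b')) =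
      map (LinearMap.mulLeft R a ∘ₗ actA.flip a')
        (map (LinearMap.mul' R H) (LinearMap.mulRight R b' ∘ₗ ractB.flip b) ∘ₗ
          (TensorProduct.assoc R H H H).symm.toLinearMap)
        (TensorProduct.assoc R H H (H ⊗[R] H) (comul (R := R) φ ⊗ₜ[R] comul (R := R) ψ))

variable (actA : H →ₗ[R] A →ₗ[R] A) (ractB : H →ₗ[R] B →ₗ[R] B)

def tripleTerm (a a' a'' : A) (b b' b'' : B) (p₁ p₂ p₃ q₁ q₂ q₃ r₁ r₂ r₃ : H) :
    A ⊗[R] (H ⊗[R] B) :=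
  (a * actA p₁ a' * actA (p₂ * q₁) a'') ⊗ₜ
    ((p₃ * q₂ * r₁) ⊗ₜ (ractB (q₃ * r₂) b * ractB r₃ b' * b''))

section

variable (a a' a'' : A) (b b' b'' : B)

theorem isTrilinear_tripleTerm_left (q₁ q₂ q₃ r₁ r₂ r₃ : H) :
    IsTrilinear R fun p₁ p₂ p₃ =>
      tripleTerm actA ractB a a' a'' b b' b'' p₁ p₂ p₃ q₁ q₂ q₃ r₁ r₂ r₃ :=
  ⟨map (LinearMap.mul' R A ∘ₗ
      map (LinearMap.mulLeft R a ∘ₗ actA.flip a') (actA.flip a'' ∘ₗ LinearMap.mulRight R q₁))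
    ((mk R H B).flip (ractB (q₃ * r₂) b * ractB r₃ b' * b'') ∘ₗ LinearMap.mulRight R (q₂ * r₁)) ∘ₗ
      (TensorProduct.assoc R H H H).symm.toLinearMap,
    fun _ _ _ => by simp [tripleTerm, mul_assoc]⟩

theorem isTrilinear_tripleTerm_middle (p₁ p₂ p₃ r₁ r₂ r₃ : H) :
    IsTrilinear R fun q₁ q₂ q₃ =>
      tripleTerm actA ractB a a' a'' b b' b'' p₁ p₂ p₃ q₁ q₂ q₃ r₁ r₂ r₃ :=
  ⟨map (LinearMap.mulLeft R (a * actA p₁ a') ∘ₗ actA.flip a'' ∘ₗ LinearMap.mulLeft R p₂)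
    (map (LinearMap.mulLeft R p₃ ∘ₗ LinearMap.mulRight R r₁)
      (LinearMap.mulRight R (ractB r₃ b' * b'') ∘ₗ ractB.flip b ∘ₗ LinearMap.mulRight R r₂)),
    fun _ _ _ => by simp [tripleTerm, mul_assoc]⟩

theorem isTrilinear_tripleTerm_right (p₁ p₂ p₃ q₁ q₂ q₃ : H) :
    IsTrilinear R fun r₁ r₂ r₃ =>
      tripleTerm actA ractB a a' a'' b b' b'' p₁ p₂ p₃ q₁ q₂ q₃ r₁ r₂ r₃ :=
  ⟨mk R A (H ⊗[R] B) (a * actA p₁ a' * actA (p₂ * q₁) a'') ∘ₗ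
    map (LinearMap.mulLeft R (p₃ * q₂))
      (LinearMap.mulRight R b'' ∘ₗ LinearMap.mul' R B ∘ₗ
        map (ractB.flip b ∘ₗ LinearMap.mulLeft R q₃) (ractB.flip b')),
    fun _ _ _ => by simp [tripleTerm, mul_assoc]⟩

end

namespace IsCrossedProductMul

variable {actA ractB}
  {mul : A ⊗[R] (H ⊗[R] B) →ₗ[R] A ⊗[R] (H ⊗[R] B) →ₗ[R] A ⊗[R] (H ⊗[R] B)}

theorem tmul_eq_sum (hmul : IsCrossedProductMul actA ractB mul) (a a' : A) (b b' : B)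
    {φ ψ : H} {ι κ : Type*} (rφ : Repr R φ ι) (rψ : Repr R ψ κ) :
    mul (a ⊗ₜ (φ ⊗ₜ b)) (a' ⊗ₜ (ψ ⊗ₜ b')) =
      ∑ i ∈ rφ.index, ∑ j ∈ rψ.index, (a * actA (rφ.left i) a') ⊗ₜ
        ((rφ.right i * rψ.left j) ⊗ₜ (ractB (rψ.right j) b * b')) := by
  simp only [hmul a a' b b' φ ψ, ← rφ.eq, ← rψ.eq, tmul_sum, sum_tmul, map_sum, assoc_tmul,
    map_tmul, LinearMap.coe_comp, Function.comp_apply, LinearMap.flip_apply,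
    LinearMap.mulLeft_apply, LinearEquiv.coe_coe, assoc_symm_tmul, LinearMap.mul'_apply,
    LinearMap.mulRight_apply]
  exact Finset.sum_comm

theorem mul_mul_tmul_eq_sum (hmul : IsCrossedProductMul actA ractB mul)
    (hB : IsMeasuring R ractB)
    (hB_mul : ∀ (φ ψ : H) (b : B), ractB ψ (ractB φ b) = ractB (φ * ψ) b)
    (a a' a'' : A) (b b' b'' : B) (φ ψ χ : H) :
    mul (mul (a ⊗ₜ (φ ⊗ₜ b)) (a' ⊗ₜ (ψ ⊗ₜ b'))) (a'' ⊗ₜ (χ ⊗ₜ b'')) =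
      ∑ i ∈ (ℛ R φ).index, ∑ m ∈ (ℛ R i.2).index, ∑ j ∈ (ℛ R ψ).index, ∑ n ∈ (ℛ R j.1).index,
        ∑ k ∈ (ℛ R χ).index, ∑ l ∈ (ℛ R k.2).index,
          tripleTerm actA ractB a a' a'' b b' b'' i.1 m.1 m.2 n.1 n.2 j.2 k.1 l.1 l.2 := by
  rw [hmul.tmul_eq_sum _ _ _ _ (ℛ R φ) (ℛ R ψ)]
  simp only [map_sum, LinearMap.sum_apply,
    hmul.tmul_eq_sum _ _ _ _ ((ℛ R _).mul (ℛ R _)) (ℛ R χ)]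
  simp only [hB.apply_mul (ℛ R _), hB_mul, Finset.sum_product, Repr.mul_left, Repr.mul_right,
    Repr.mul_index, Finset.sum_mul, tmul_sum, tripleTerm]
  exact Finset.sum_congr rfl fun _ _ => Finset.sum_comm

theorem mul_tmul_mul_eq_sum (hmul : IsCrossedProductMul actA ractB mul)
    (hA : IsMeasuring R actA)
    (hA_mul : ∀ (φ ψ : H) (a : A), actA (φ * ψ) a = actA φ (actA ψ a))
    (a a' a'' : A) (b b' b'' : B) (φ ψ χ : H) :
    mul (a ⊗ₜ (φ ⊗ₜ b)) (mul (a' ⊗ₜ (ψ ⊗ₜ b')) (a'' ⊗ₜ (χ ⊗ₜ b''))) =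
      ∑ i ∈ (ℛ R φ).index, ∑ m ∈ (ℛ R i.1).index, ∑ j ∈ (ℛ R ψ).index, ∑ n ∈ (ℛ R j.2).index,
        ∑ k ∈ (ℛ R χ).index, ∑ l ∈ (ℛ R k.1).index,
          tripleTerm actA ractB a a' a'' b b' b'' m.1 m.2 i.2 j.1 n.1 n.2 l.1 l.2 k.2 := by
  rw [hmul.tmul_eq_sum _ _ _ _ (ℛ R ψ) (ℛ R χ)]
  simp only [map_sum, hmul.tmul_eq_sum _ _ _ _ (ℛ R φ) ((ℛ R _).mul (ℛ R _))]
  simp only [hA.apply_mul (ℛ R _), ← hA_mul, Finset.sum_product, Repr.mul_left, Repr.mul_right,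
    Repr.mul_index, Finset.mul_sum, sum_tmul, tripleTerm, mul_assoc]
  -- reorder the summation indices from `j k i n l m` to `i m j n k l`
  simp only [Finset.sum_comm (t := (ℛ R φ).index)]
  simp only [Finset.sum_comm (t := (ℛ R ((ℛ R φ).left _)).index)]
  simp only [Finset.sum_comm (t := (ℛ R ((ℛ R ψ).right _)).index)]
  rfl

theorem mul_assoc_tmul (hmul : IsCrossedProductMul actA ractB mul)
    (hA : IsMeasuring R actA) (hA_mul : ∀ (φ ψ : H) (a : A), actA (φ * ψ) a = actA φ (actA ψ a))
    (hB : IsMeasuring R ractB)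
    (hB_mul : ∀ (φ ψ : H) (b : B), ractB ψ (ractB φ b) = ractB (φ * ψ) b)
    (a a' a'' : A) (b b' b'' : B) (φ ψ χ : H) :
    mul (mul (a ⊗ₜ (φ ⊗ₜ b)) (a' ⊗ₜ (ψ ⊗ₜ b'))) (a'' ⊗ₜ (χ ⊗ₜ b'')) =
      mul (a ⊗ₜ (φ ⊗ₜ b)) (mul (a' ⊗ₜ (ψ ⊗ₜ b')) (a'' ⊗ₜ (χ ⊗ₜ b''))) := by
  let T := tripleTerm actA ractB a a' a'' b b' b''
  calc _ = ∑ i ∈ (ℛ R φ).index, ∑ m ∈ (ℛ R i.2).index, ∑ j ∈ (ℛ R ψ).index,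
        ∑ n ∈ (ℛ R j.1).index, ∑ k ∈ (ℛ R χ).index, ∑ l ∈ (ℛ R k.2).index,
          T i.1 m.1 m.2 n.1 n.2 j.2 k.1 l.1 l.2 := hmul.mul_mul_tmul_eq_sum hB hB_mul ..
    _ = ∑ i ∈ (ℛ R φ).index, ∑ m ∈ (ℛ R i.1).index, ∑ j ∈ (ℛ R ψ).index,
        ∑ n ∈ (ℛ R j.1).index, ∑ k ∈ (ℛ R χ).index, ∑ l ∈ (ℛ R k.2).index,
          T m.1 m.2 i.2 n.1 n.2 j.2 k.1 l.1 l.2 :=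
      (sum_sum_eq_of_isTrilinear (ℛ R φ) (fun i => ℛ R i.1) (fun i => ℛ R i.2)
        (IsTrilinear.sum _ fun j => IsTrilinear.sum _ fun n => IsTrilinear.sum _ fun k =>
          IsTrilinear.sum _ fun l => isTrilinear_tripleTerm_left ..)).symm
    _ = ∑ i ∈ (ℛ R φ).index, ∑ m ∈ (ℛ R i.1).index, ∑ j ∈ (ℛ R ψ).index,
        ∑ n ∈ (ℛ R j.2).index, ∑ k ∈ (ℛ R χ).index, ∑ l ∈ (ℛ R k.2).index,
          T m.1 m.2 i.2 j.1 n.1 n.2 k.1 l.1 l.2 :=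
      Finset.sum_congr rfl fun i _ => Finset.sum_congr rfl fun m _ =>
        sum_sum_eq_of_isTrilinear (ℛ R ψ) (fun j => ℛ R j.1) (fun j => ℛ R j.2)
          (IsTrilinear.sum _ fun k => IsTrilinear.sum _ fun l => isTrilinear_tripleTerm_middle ..)
    _ = ∑ i ∈ (ℛ R φ).index, ∑ m ∈ (ℛ R i.1).index, ∑ j ∈ (ℛ R ψ).index,
        ∑ n ∈ (ℛ R j.2).index, ∑ k ∈ (ℛ R χ).index, ∑ l ∈ (ℛ R k.1).index,
          T m.1 m.2 i.2 j.1 n.1 n.2 l.1 l.2 k.2 :=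
      Finset.sum_congr rfl fun i _ => Finset.sum_congr rfl fun m _ =>
        Finset.sum_congr rfl fun j _ => Finset.sum_congr rfl fun n _ =>
          (sum_sum_eq_of_isTrilinear (ℛ R χ) (fun k => ℛ R k.1) (fun k => ℛ R k.2)
            (isTrilinear_tripleTerm_right ..)).symm
    _ = _ := (hmul.mul_tmul_mul_eq_sum hA hA_mul ..).symm

theorem one_mul_tmul (hmul : IsCrossedProductMul actA ractB mul)
    (hA_one : ∀ a : A, actA 1 a = a) (hB_unit : ∀ φ : H, ractB φ 1 = counit (R := R) φ • 1)
    (a : A) (φ : H) (b : B) :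
    mul (1 ⊗ₜ (1 ⊗ₜ 1)) (a ⊗ₜ (φ ⊗ₜ b)) = a ⊗ₜ (φ ⊗ₜ b) := by
  rw [hmul.tmul_eq_sum _ _ _ _ (Repr.one R H) (ℛ R φ)]
  conv_rhs => rw [← sum_counit_right_smul (ℛ R φ)]
  simp only [Repr.one, Finset.sum_singleton, hA_one, hB_unit, one_mul, smul_mul_assoc, sum_tmul,
    tmul_sum, ← smul_tmul', tmul_smul]

theorem mul_one_tmul (hmul : IsCrossedProductMul actA ractB mul)
    (hA_unit : ∀ φ : H, actA φ 1 = counit (R := R) φ • 1) (hB_one : ∀ b : B, ractB 1 b = b)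
    (a : A) (φ : H) (b : B) :
    mul (a ⊗ₜ (φ ⊗ₜ b)) (1 ⊗ₜ (1 ⊗ₜ 1)) = a ⊗ₜ (φ ⊗ₜ b) := by
  rw [hmul.tmul_eq_sum _ _ _ _ (ℛ R φ) (Repr.one R H)]
  conv_rhs => rw [← sum_counit_smul (ℛ R φ)]
  simp only [Repr.one, Finset.sum_singleton, hA_unit, hB_one, mul_one, mul_smul_comm, sum_tmul,
    tmul_sum, ← smul_tmul', tmul_smul]

theorem mul_assoc (hmul : IsCrossedProductMul actA ractB mul)
    (hA : IsMeasuring R actA) (hA_mul : ∀ (φ ψ : H) (a : A), actA (φ * ψ) a = actA φ (actA ψ a))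
    (hB : IsMeasuring R ractB)
    (hB_mul : ∀ (φ ψ : H) (b : B), ractB ψ (ractB φ b) = ractB (φ * ψ) b)
    (x y z : A ⊗[R] (H ⊗[R] B)) :
    mul (mul x y) z = mul x (mul y z) := by
  have : mul.compr₂ mul = (LinearMap.llcomp R _ _ _ ∘ₗ mul).compl₂ mul := by
    ext a φ b a' ψ b' a'' χ b''
    exact hmul.mul_assoc_tmul hA hA_mul hB hB_mul ..
  exact congr($this x y z)

theorem one_mul (hmul : IsCrossedProductMul actA ractB mul)
    (hA_one : ∀ a : A, actA 1 a = a) (hB_unit : ∀ φ : H, ractB φ 1 = counit (R := R) φ • 1)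
    (x : A ⊗[R] (H ⊗[R] B)) :
    mul (1 ⊗ₜ (1 ⊗ₜ 1)) x = x := by
  have : mul (1 ⊗ₜ (1 ⊗ₜ 1)) = LinearMap.id := by
    ext a φ b
    exact hmul.one_mul_tmul hA_one hB_unit ..
  exact congr($this x)

theorem mul_one (hmul : IsCrossedProductMul actA ractB mul)
    (hA_unit : ∀ φ : H, actA φ 1 = counit (R := R) φ • 1) (hB_one : ∀ b : B, ractB 1 b = b)
    (x : A ⊗[R] (H ⊗[R] B)) :
    mul x (1 ⊗ₜ (1 ⊗ₜ 1)) = x := by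
  have : mul.flip (1 ⊗ₜ (1 ⊗ₜ 1)) = LinearMap.id := by
    ext a φ b
    exact hmul.mul_one_tmul hA_unit hB_one ..
  exact congr($this x)

end IsCrossedProductMul

end CrossedProduct

theorem statement6
    (H A B : Type*) [Ring H] [HopfAlgebra ℂ H]
    [Ring A] [Algebra ℂ A] [Ring B] [Algebra ℂ B]
    -- left Hopf module action `▷` of `Ĝ = H` on `A`
    (actA : H →ₗ[ℂ] A →ₗ[ℂ] A)
    (hactA_mul : ∀ (φ ψ : H) (a : A), actA (φ * ψ) a = actA φ (actA ψ a))
    (hactA_one : ∀ a : A, actA 1 a = a)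
    (hactA_alg : ∀ (φ : H) (a a' : A),
      actA φ (a * a') =
        LinearMap.mul' ℂ A
          (TensorProduct.map (actA.flip a) (actA.flip a') (Coalgebra.comul (R := ℂ) φ)))
    (hactA_unit : ∀ φ : H, actA φ (1 : A) = Coalgebra.counit (R := ℂ) φ • (1 : A))
    -- right Hopf module action `◁` of `Ĝ = H` on `B`
    (ractB : H →ₗ[ℂ] B →ₗ[ℂ] B)
    (hractB_mul : ∀ (φ ψ : H) (b : B), ractB ψ (ractB φ b) = ractB (φ * ψ) b)
    (hractB_one : ∀ b : B, ractB 1 b = b)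
    (hractB_alg : ∀ (φ : H) (b b' : B),
      ractB φ (b * b') =
        LinearMap.mul' ℂ B
          (TensorProduct.map (ractB.flip b) (ractB.flip b') (Coalgebra.comul (R := ℂ) φ)))
    (hractB_unit : ∀ φ : H, ractB φ (1 : B) = Coalgebra.counit (R := ℂ) φ • (1 : B))
    -- the two-sided crossed product structure on `A ⊗ Ĝ ⊗ B`
    (mul : A ⊗[ℂ] (H ⊗[ℂ] B) →ₗ[ℂ] A ⊗[ℂ] (H ⊗[ℂ] B) →ₗ[ℂ] A ⊗[ℂ] (H ⊗[ℂ] B))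
    (hmul : ∀ (a a' : A) (b b' : B) (φ ψ : H),
      mul (a ⊗ₜ[ℂ] (φ ⊗ₜ[ℂ] b)) (a' ⊗ₜ[ℂ] (ψ ⊗ₜ[ℂ] b')) =
        TensorProduct.map (LinearMap.mulLeft ℂ a ∘ₗ actA.flip a')
          (TensorProduct.map (LinearMap.mul' ℂ H)
              (LinearMap.mulRight ℂ b' ∘ₗ ractB.flip b) ∘ₗ
            (TensorProduct.assoc ℂ H H H).symm.toLinearMap)
          ((TensorProduct.assoc ℂ H H (H ⊗[ℂ] H))
            ((Coalgebra.comul (R := ℂ) φ) ⊗ₜ[ℂ] (Coalgebra.comul (R := ℂ) ψ)))) :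
    -- associativity
    (∀ x y z : A ⊗[ℂ] (H ⊗[ℂ] B), mul (mul x y) z = mul x (mul y z)) ∧
    -- unit `1_A ⋊ 1̂ ⋉ 1_B`
    (∀ x : A ⊗[ℂ] (H ⊗[ℂ] B), mul ((1 : A) ⊗ₜ[ℂ] ((1 : H) ⊗ₜ[ℂ] (1 : B))) x = x) ∧
    (∀ x : A ⊗[ℂ] (H ⊗[ℂ] B), mul x ((1 : A) ⊗ₜ[ℂ] ((1 : H) ⊗ₜ[ℂ] (1 : B))) = x) :=
  ⟨IsCrossedProductMul.mul_assoc hmul hactA_alg hactA_mul hractB_alg hractB_mul,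
    IsCrossedProductMul.one_mul hmul hactA_one hractB_unit,
    IsCrossedProductMul.mul_one hmul hactA_unit hractB_one⟩
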